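/- arXiv:1003.5009 — 3 statements merged into one kernel-verified Lean document; each statement's English description precedes it below -/
import Mathlib

section
/- For real z with |z| < 1/2, one has √(1 - 4z²) = 1 - 4·∑_{i even, i ≥ 2} a_{i-2} z^i, where a_i = (1/(i+2))·C(i, i/2), the series converging absolutely. -/
open MeasureTheory ProbabilityTheory Finset

noncomputable def aCoef (i : ℕ) : ℝ := (1 / ((i : ℝ) + 2)) * (i.choose (i / 2) : ℝ)

theorem centralBinom_le_four_pow (n : ℕ) : Nat.centralBinom n ≤ 4 ^ n := by
  have hm : n ∈ Finset.range (2*n+1) := by simp; omega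
  have h : ∀ k ∈ Finset.range (2*n+1), 0 ≤ (2*n).choose k := fun _ _ => Nat.zero_le _
  have := Finset.single_le_sum h hm
  calc Nat.centralBinom n = (2*n).choose n := rfl
    _ ≤ ∑ k ∈ Finset.range (2*n+1), (2*n).choose k := this
    _ = 4 ^ n := by rw [Nat.sum_range_choose]; rw [show 4 = 2^2 from rfl, ← pow_mul]

theorem catalan_le_four_pow (n : ℕ) : catalan n ≤ 4 ^ n := by
  have h := succ_mul_catalan_eq_centralBinom n
  have h2 := centralBinom_le_four_pow n
  calc catalan n ≤ (n+1) * catalan n := Nat.le_mul_of_pos_left _ n.succ_pos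
    _ ≤ 4 ^ n := h ▸ h2

theorem summable_cat {x : ℝ} (hx0 : 0 ≤ x) (hx : x < 1/4) :
    Summable fun n : ℕ => (catalan n : ℝ) * x ^ n := by
  apply Summable.of_nonneg_of_le (fun n => by positivity)
    (fun n => ?_) (summable_geometric_of_lt_one (by positivity) (by linarith : 4*x < 1))
  calc (catalan n : ℝ) * x ^ n ≤ (4^n : ℕ) * x ^ n := by
        gcongr; exact_mod_cast catalan_le_four_pow n
    _ = (4*x)^n := by push_cast; rw [mul_pow]

noncomputable def catG (x : ℝ) : ℝ := ∑' n : ℕ, (catalan n : ℝ) * x ^ n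

theorem catG_sq {x : ℝ} (hx0 : 0 ≤ x) (hx : x < 1/4) :
    x * (catG x * catG x) = catG x - 1 := by
  have hs := summable_cat hx0 hx
  have hnorm : Summable fun n : ℕ => ‖(catalan n : ℝ) * x ^ n‖ := by
    refine hs.congr fun n => ?_
    rw [Real.norm_eq_abs, abs_of_nonneg (by positivity)]
  have hmul := tsum_mul_tsum_eq_tsum_sum_antidiagonal_of_summable_norm hnorm hnorm
  have hdiag : ∀ n : ℕ, (∑ kl ∈ antidiagonal n,
      ((catalan kl.1 : ℝ) * x ^ kl.1) * ((catalan kl.2 : ℝ) * x ^ kl.2))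
      = (catalan (n+1) : ℝ) * x ^ n := by
    intro n
    rw [catalan_succ' n]
    push_cast
    rw [Finset.sum_mul]
    apply Finset.sum_congr rfl
    intro kl hkl
    have : kl.1 + kl.2 = n := Finset.HasAntidiagonal.mem_antidiagonal.mp hkl
    rw [← this]; ring
  have h1 : catG x * catG x = ∑' n : ℕ, (catalan (n+1) : ℝ) * x ^ n := by
    rw [catG, hmul]; exact tsum_congr hdiag
  have h2 : catG x = 1 + ∑' n : ℕ, (catalan (n+1) : ℝ) * x ^ (n+1) := by
    rw [catG, Summable.tsum_eq_zero_add hs]; simp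
  rw [h1, ← tsum_mul_left]
  rw [h2]
  have : ∀ n : ℕ, x * ((catalan (n+1) : ℝ) * x ^ n) = (catalan (n+1) : ℝ) * x ^ (n+1) := by
    intro n; ring
  rw [tsum_congr this]
  ring

theorem catH_sq {x : ℝ} (hx0 : 0 ≤ x) (hx : x < 1/4) :
    (1 - 2 * x * catG x) ^ 2 = 1 - 4 * x := by
  have h := catG_sq hx0 hx
  ring_nf
  nlinarith [h]

theorem catH_nonneg {x : ℝ} (hx0 : 0 ≤ x) (hx : x < 1/4) :
    0 ≤ 1 - 2 * x * catG x := by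
  by_contra hneg
  push_neg at hneg
  set H : ℝ → ℝ := fun y => 1 - 2 * y * catG y with hH
  have hcont : ContinuousOn H (Set.Icc 0 x) := by
    have hg : ContinuousOn catG (Set.Icc 0 x) := by
      apply continuousOn_tsum (f := fun (n : ℕ) (y : ℝ) => (catalan n : ℝ) * y ^ n)
        (u := fun n : ℕ => (catalan n : ℝ) * x ^ n)
      · intro n; fun_prop
      · exact summable_cat hx0 hx
      · intro n y hy
        obtain ⟨hy1, hy2⟩ := hy
        rw [Real.norm_eq_abs, abs_of_nonneg (by positivity)]
        gcongr
    rw [hH]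
    exact (continuousOn_const.sub ((continuousOn_const.mul continuousOn_id).mul hg))
  have hH0 : H 0 = 1 := by
    have : catG 0 = 1 := by
      rw [catG, tsum_eq_single 0 (by intro n hn; simp [zero_pow hn])]
      simp
    simp [hH, this]
  have h0 : (0:ℝ) ∈ Set.Icc (H x) (H 0) := by
    constructor
    · exact le_of_lt hneg
    · rw [hH0]; norm_num
  obtain ⟨c, hc, hHc⟩ := intermediate_value_Icc' hx0 hcont h0
  have hc4 : c < 1/4 := lt_of_le_of_lt hc.2 hx
  have := catH_sq hc.1 hc4
  rw [show (1 : ℝ) - 2 * c * catG c = H c from rfl, hHc] at this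
  nlinarith [hc.2]

theorem aCoef_nonneg (k : ℕ) : 0 ≤ aCoef k := by
  unfold aCoef; positivity

theorem aCoef_le_two_pow (k : ℕ) : aCoef k ≤ 2 ^ k := by
  unfold aCoef
  have h1 : (k.choose (k/2) : ℝ) ≤ 2 ^ k := by
    have hm : k/2 ∈ Finset.range (k+1) := by simp; omega
    have := Finset.single_le_sum (fun i _ => Nat.zero_le (k.choose i)) hm
    rw [Nat.sum_range_choose] at this
    exact_mod_cast this
  have h2 : (1 : ℝ) / ((k : ℝ) + 2) ≤ 1 := by
    rw [div_le_one (by positivity)]; linarith [Nat.cast_nonneg (α := ℝ) k]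
  calc (1 / ((k : ℝ) + 2)) * (k.choose (k / 2) : ℝ) ≤ 1 * (2:ℝ)^k := by
        apply mul_le_mul h2 h1 (by positivity) one_pos.le
    _ = 2 ^ k := one_mul _

theorem aCoef_two_mul (n : ℕ) : aCoef (2 * n) = (catalan n : ℝ) / 2 := by
  unfold aCoef
  have h1 : (2 * n) / 2 = n := by omega
  rw [h1, show (2*n).choose n = Nat.centralBinom n from rfl,
    ← succ_mul_catalan_eq_centralBinom]
  push_cast
  have : ((n : ℝ) + 1) ≠ 0 := by positivity
  field_simp

theorem sqrt_series (z : ℝ) (hz : |z| < 1 / 2) :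
    (Summable fun i : ℕ => |if Even i ∧ 2 ≤ i then aCoef (i - 2) * z ^ i else 0|) ∧
      Real.sqrt (1 - 4 * z ^ 2)
        = 1 - 4 * ∑' i : ℕ, (if Even i ∧ 2 ≤ i then aCoef (i - 2) * z ^ i else 0) := by
  set f : ℕ → ℝ := fun i => if Even i ∧ 2 ≤ i then aCoef (i - 2) * z ^ i else 0 with hf
  have habs : ∀ i, |f i| ≤ (2 * |z|) ^ i := by
    intro i
    rw [hf]
    by_cases h : Even i ∧ 2 ≤ i
    · simp only [if_pos h]
      rw [abs_mul, abs_of_nonneg (aCoef_nonneg _), abs_pow, mul_pow]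
      have h1 : aCoef (i - 2) ≤ 2 ^ i := le_trans (aCoef_le_two_pow _)
        (by apply pow_le_pow_right₀ one_le_two; omega)
      gcongr
    · simp only [if_neg h, abs_zero]
      positivity
  have h2z : 2 * |z| < 1 := by linarith
  have hsum : Summable fun i => |f i| :=
    Summable.of_nonneg_of_le (fun i => abs_nonneg _) habs
      (summable_geometric_of_lt_one (by positivity) h2z)
  refine ⟨hsum, ?_⟩
  set t : ℝ := z ^ 2 with hT
  have ht0 : 0 ≤ t := sq_nonneg z
  have ht4 : t < 1/4 := by
    have : |z| * |z| < (1/2) * (1/2) :=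
      mul_lt_mul'' hz hz (abs_nonneg z) (abs_nonneg z)
    calc t = |z| * |z| := by rw [hT, ← sq_abs]; ring
      _ < 1/4 := by linarith
  -- compute the tsum
  have hinj : Function.Injective (fun n : ℕ => 2 * n + 2) := by
    intro a b h; simp only [] at h; omega
  have hrange : ∀ i, i ∉ Set.range (fun n : ℕ => 2 * n + 2) → f i = 0 := by
    intro i hi
    rw [hf]
    apply if_neg
    rintro ⟨⟨m, hm⟩, h2⟩
    exact hi ⟨m - 1, show 2 * (m - 1) + 2 = i by omega⟩
  have hsupp : Function.support f ⊆ Set.range (fun n : ℕ => 2 * n + 2) := by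
    intro i hi
    by_contra h
    exact hi (hrange i h)
  have htsum : ∑' i, f i = ∑' n : ℕ, f (2 * n + 2) := (hinj.tsum_eq hsupp).symm
  have hfn : ∀ n : ℕ, f (2 * n + 2) = ((catalan n : ℝ) * t ^ n) * (t / 2) := by
    intro n
    rw [hf]
    simp only
    rw [if_pos ⟨⟨n+1, by omega⟩, by omega⟩]
    have : 2 * n + 2 - 2 = 2 * n := by omega
    rw [this, aCoef_two_mul, hT]
    rw [show z ^ (2*n+2) = (z^2)^n * z^2 by rw [← pow_mul, ← pow_add]]
    ring
  have htsum2 : ∑' i, f i = catG t * (t / 2) := by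
    rw [htsum, tsum_congr hfn, tsum_mul_right, catG]
  rw [htsum2]
  have h14 : 1 - 4 * z ^ 2 = 1 - 4 * t := by rw [hT]
  rw [h14, ← catH_sq ht0 ht4, Real.sqrt_sq (catH_nonneg ht0 ht4)]
  ring
end

section
/- For the Bernoulli(p) random walk started at 0 and any n ≥ 1, P(S_1 ≤ 0, S_2 ≤ 0, ..., S_n ≤ 0) = 1 − 2p·∑_{i even, 0 ≤ i ≤ n−1} a_i (pq)^{i/2}, where a_i = (1/(i+2))·C(i, i/2). -/
/-!
Record the first `n` steps of the walk as a word in `DyckStep`, writing `D` for a step `+1` and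
`U` for a step `-1`. Almost surely the walk stays `≤ 0` up to time `n` exactly when no prefix of
this word has more `D`s than `U`s, and by independence a word has probability
`p ^ #D * (1 - p) ^ #U`. Appending a step to such a word keeps the property unless the word is
balanced (the walk is back at `0`) and the step is `D`; hence the total weight of these words
satisfies `nonposWeight (n + 1) = nonposWeight n - p * returnWeight n`, where `returnWeight n` is
the weight of the balanced ones. Balanced words of length `2k` are Dyck words, so
`returnWeight (2k) = catalan k * (p * (1 - p)) ^ k`, and
`catalan k = 2 * aCoef (2k)` turns the telescoped recursion into the formula.
-/

open MeasureTheory ProbabilityTheory Finset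

open DyckStep

namespace DyckStep

instance : Fintype DyckStep := ⟨{U, D}, fun s => by cases s <;> simp⟩

lemma sum_univ {M : Type*} [AddCommMonoid M] (f : DyckStep → M) : ∑ s, f s = f U + f D :=
  Finset.sum_pair (by decide)

def toInt : DyckStep → ℤ
  | U => -1
  | D => 1

def ofInt (z : ℤ) : DyckStep := if z = 1 then D else U

lemma toInt_ofInt {z : ℤ} (hz : z = 1 ∨ z = -1) : (ofInt z).toInt = z := by
  rcases hz with rfl | rfl <;> rfl

def weight {R : Type*} [CommRing R] (p : R) : DyckStep → R
  | U => 1 - p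
  | D => p

end DyckStep

namespace List

lemma sum_map_toInt (l : List DyckStep) : (l.map toInt).sum = l.count D - l.count U := by
  induction l with
  | nil => simp
  | cons s l ih => cases s <;> grind [toInt]

lemma count_D_add_count_U (l : List DyckStep) : l.count D + l.count U = l.length := by
  induction l with
  | nil => simp
  | cons s l ih => cases s <;> simp <;> omega

def StaysNonpos (l : List DyckStep) : Prop :=
  ∀ i, (l.take i).count D ≤ (l.take i).count U

lemma staysNonpos_iff_forall_le_length {l : List DyckStep} :
    l.StaysNonpos ↔ ∀ m ≤ l.length, (l.take m).count D ≤ (l.take m).count U := by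
  refine ⟨fun h m _ => h m, fun h i => ?_⟩
  rcases le_or_gt i l.length with hi | hi
  · exact h i hi
  · simpa [take_of_length_le hi.le] using h l.length le_rfl

instance : DecidablePred StaysNonpos := fun _ =>
  decidable_of_iff _ staysNonpos_iff_forall_le_length.symm

lemma StaysNonpos.count_le {l : List DyckStep} (h : l.StaysNonpos) : l.count D ≤ l.count U := by
  simpa using h l.length

lemma staysNonpos_append_singleton {l : List DyckStep} {s : DyckStep} :
    (l ++ [s]).StaysNonpos ↔ l.StaysNonpos ∧ (l ++ [s]).count D ≤ (l ++ [s]).count U := by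
  simp only [staysNonpos_iff_forall_le_length, length_append, length_singleton]
  refine ⟨fun h => ⟨fun i hi => ?_, by simpa [take_of_length_le] using h (l.length + 1) le_rfl⟩,
    fun ⟨hl, hs⟩ i hi => ?_⟩
  · simpa [take_append, Nat.sub_eq_zero_of_le hi] using h i (by omega)
  · rcases Nat.lt_or_eq_of_le hi with hi | rfl
    · simpa [take_append, Nat.sub_eq_zero_of_le (Nat.le_of_lt_succ hi)] using hl i (by omega)
    · simpa [take_of_length_le] using hs

section Weight

variable {R : Type*} [CommRing R] (p : R)

def pathWeight (l : List DyckStep) : R := (l.map (weight p)).prod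

lemma pathWeight_append_singleton (l : List DyckStep) (s : DyckStep) :
    (l ++ [s]).pathWeight p = l.pathWeight p * weight p s := by
  simp [pathWeight]

lemma pathWeight_eq_pow_mul_pow (l : List DyckStep) :
    l.pathWeight p = p ^ l.count D * (1 - p) ^ l.count U := by
  induction l with
  | nil => simp [pathWeight]
  | cons s l ih =>
    rw [pathWeight, map_cons, prod_cons, ← pathWeight, ih]
    cases s <;> simp [weight, pow_succ', mul_assoc, mul_left_comm]

lemma sum_ite_staysNonpos_append_singleton (l : List DyckStep) :
    ∑ s, (if (l ++ [s]).StaysNonpos then (l ++ [s]).pathWeight p else 0) =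
      (if l.StaysNonpos then l.pathWeight p else 0) -
        p * (if l.StaysNonpos ∧ l.count D = l.count U then l.pathWeight p else 0) := by
  -- appending `U` keeps a word nonpositive, appending `D` does unless the word is balanced
  simp only [DyckStep.sum_univ, staysNonpos_append_singleton, pathWeight_append_singleton,
    count_append, count_singleton, weight]
  have hle : l.StaysNonpos → l.count D ≤ l.count U := StaysNonpos.count_le
  grind

end Weight

lemma ofFn_getElem_of_length_eq {α : Type*} {l : List α} {n : ℕ} (h : l.length = n) :
    ofFn (fun i : Fin n => l[(i : ℕ)]'(h ▸ i.2)) = l := by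
  subst h
  exact ofFn_getElem

end List

open List

lemma DyckWord.length_eq_of_semilength_eq {w : DyckWord} {k : ℕ} (h : w.semilength = k) :
    w.toList.length = 2 * k := by
  rw [← w.two_mul_semilength_eq_length, h]

def balancedEquivDyckWord (k : ℕ) :
    {ε : Fin (2 * k) → DyckStep //
      (ofFn ε).StaysNonpos ∧ (ofFn ε).count D = (ofFn ε).count U} ≃
    {w : DyckWord // w.semilength = k} where
  toFun ε := ⟨⟨ofFn ε.1, ε.2.2.symm, ε.2.1⟩, by
    have := count_D_add_count_U (ofFn ε.1)
    rw [length_ofFn] at this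
    simp only [DyckWord.semilength]
    omega⟩
  invFun w := ⟨fun i => w.1.toList[(i : ℕ)]'(by
      rw [DyckWord.length_eq_of_semilength_eq w.2]; exact i.2), by
    rw [ofFn_getElem_of_length_eq (DyckWord.length_eq_of_semilength_eq w.2)]
    exact ⟨w.1.count_D_le_count_U, w.1.count_U_eq_count_D.symm⟩⟩
  left_inv ε := by ext i; simp
  right_inv w := by
    ext1; ext1
    exact ofFn_getElem_of_length_eq (DyckWord.length_eq_of_semilength_eq w.2)

lemma card_staysNonpos_balanced (k : ℕ) :
    #{ε : Fin (2 * k) → DyckStep |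
      (ofFn ε).StaysNonpos ∧ (ofFn ε).count D = (ofFn ε).count U} = catalan k := by
  rw [← Fintype.card_subtype, Fintype.card_congr (balancedEquivDyckWord k),
    DyckWord.card_dyckWord_semilength_eq_catalan]

section Weight

variable {R : Type*} [CommRing R] (p : R)

def nonposWeight (n : ℕ) : R :=
  ∑ ε : Fin n → DyckStep with (ofFn ε).StaysNonpos, (ofFn ε).pathWeight p

def returnWeight (n : ℕ) : R :=
  ∑ ε : Fin n → DyckStep with (ofFn ε).StaysNonpos ∧ (ofFn ε).count D = (ofFn ε).count U,
    (ofFn ε).pathWeight p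

lemma nonposWeight_succ (n : ℕ) :
    nonposWeight p (n + 1) = nonposWeight p n - p * returnWeight p n := by
  simp only [nonposWeight, returnWeight, sum_filter]
  rw [← (Fin.snocEquiv fun _ => DyckStep).sum_comp, Fintype.sum_prod_type_right, mul_sum,
    ← sum_sub_distrib]
  refine Finset.sum_congr rfl fun ε _ => ?_
  simp only [Fin.snocEquiv_apply, ofFn_succ', Fin.snoc_castSucc, Fin.snoc_last, concat_eq_append]
  exact sum_ite_staysNonpos_append_singleton p (ofFn ε)

lemma returnWeight_two_mul (k : ℕ) :
    returnWeight p (2 * k) = catalan k * (p * (1 - p)) ^ k := by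
  rw [returnWeight, Finset.sum_congr rfl (g := fun _ => (p * (1 - p)) ^ k), sum_const,
    card_staysNonpos_balanced, nsmul_eq_mul]
  intro ε hε
  have hlen := count_D_add_count_U (ofFn ε)
  rw [length_ofFn] at hlen
  rw [Finset.mem_filter] at hε
  rw [pathWeight_eq_pow_mul_pow, ← hε.2.2, ← mul_pow, show (ofFn ε).count D = k by omega]

lemma returnWeight_of_odd {n : ℕ} (hn : Odd n) : returnWeight p n = 0 := by
  refine sum_eq_zero fun ε hε => absurd hn ?_
  rw [Finset.mem_filter] at hε
  have hlen := count_D_add_count_U (ofFn ε)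
  rw [length_ofFn, hε.2.2] at hlen
  rw [Nat.not_odd_iff_even, ← hlen]
  exact ⟨_, rfl⟩

theorem nonposWeight_eq (n : ℕ) :
    nonposWeight p n =
      1 - p * ∑ i ∈ range n with Even i, (catalan (i / 2) : R) * (p * (1 - p)) ^ (i / 2) := by
  induction n with
  | zero => simp [nonposWeight, pathWeight, show [].StaysNonpos from fun _ => by simp]
  | succ n ih =>
    rw [nonposWeight_succ, ih, range_add_one, filter_insert]
    rcases Nat.even_or_odd n with ⟨k, rfl⟩ | hn
    · rw [if_pos ⟨k, rfl⟩, sum_insert (by simp), ← two_mul, returnWeight_two_mul,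
        Nat.mul_div_cancel_left k two_pos]
      ring
    · rw [if_neg (Nat.not_even_iff_odd.2 hn), returnWeight_of_odd p hn, mul_zero, sub_zero]

end Weight

lemma catalan_div_two_eq_two_mul_aCoef {i : ℕ} (hi : Even i) :
    (catalan (i / 2) : ℝ) = 2 * aCoef i := by
  obtain ⟨k, rfl⟩ := hi
  rw [aCoef, ← two_mul, Nat.mul_div_cancel_left k two_pos, ← Nat.centralBinom_eq_two_mul_choose,
    ← succ_mul_catalan_eq_centralBinom]
  push_cast
  field_simp

lemma sum_range_eq_count_D_sub_count_U {x : ℕ → ℤ} (hx : ∀ i, (ofInt (x i)).toInt = x i)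
    {m n : ℕ} (hm : m ≤ n) :
    ∑ i ∈ range m, x i = ((ofFn fun i : Fin n => ofInt (x i)).take m).count D -
      ((ofFn fun i : Fin n => ofInt (x i)).take m).count U := by
  rw [← Fin.ofFn_take_eq_take_ofFn hm, ← sum_map_toInt, map_ofFn, sum_ofFn,
    ← Fin.sum_univ_eq_sum_range]
  simp [hx]

lemma forall_sum_range_nonpos_iff {x : ℕ → ℤ} (hx : ∀ i, (ofInt (x i)).toInt = x i) (n : ℕ) :
    (∀ m, 1 ≤ m → m ≤ n → ∑ i ∈ range m, x i ≤ 0) ↔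
      (ofFn fun i : Fin n => ofInt (x i)).StaysNonpos := by
  rw [staysNonpos_iff_forall_le_length, length_ofFn]
  refine ⟨fun h m hm => ?_, fun h m _ hm => ?_⟩
  · rcases Nat.eq_zero_or_pos m with rfl | hm0
    · simp
    · have := h m hm0 hm
      rw [sum_range_eq_count_D_sub_count_U hx hm] at this
      omega
  · have := h m hm
    rw [sum_range_eq_count_D_sub_count_U hx hm]
    omega

section Walk

variable {Ω : Type*} {X : ℕ → Ω → ℤ}

def stepWord (X : ℕ → Ω → ℤ) (n : ℕ) (ω : Ω) : Fin n → DyckStep := fun i => ofInt (X i ω)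

lemma stepWord_preimage_singleton {n : ℕ} (ε : Fin n → DyckStep) :
    stepWord X n ⁻¹' {ε} = ⋂ i : Fin n, X i ⁻¹' {z | ofInt z = ε i} := by
  ext ω
  simp [stepWord, funext_iff]

variable [MeasurableSpace Ω] {μ : Measure Ω} [IsProbabilityMeasure μ] {p : ℝ}

lemma measurableSet_stepWord_preimage (hmeas : ∀ i, Measurable (X i)) {n : ℕ}
    (ε : Fin n → DyckStep) : MeasurableSet (stepWord X n ⁻¹' {ε}) := by
  rw [stepWord_preimage_singleton]
  exact MeasurableSet.iInter fun i => hmeas i trivial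

lemma measureReal_ofInt_preimage {i : ℕ} (hmeas : Measurable (X i)) (hp0 : 0 ≤ p)
    (hX1 : μ {ω | X i ω = 1} = ENNReal.ofReal p) (s : DyckStep) :
    μ.real (X i ⁻¹' {z | ofInt z = s}) = weight p s := by
  have h1 : μ.real {ω | X i ω = 1} = p := by rw [measureReal_def, hX1, ENNReal.toReal_ofReal hp0]
  cases s
  · have : X i ⁻¹' {z | ofInt z = U} = {ω | X i ω = 1}ᶜ := by ext; simp [ofInt]
    rw [this, probReal_compl_eq_one_sub (s := {ω | X i ω = 1}) (hmeas (measurableSet_singleton 1)),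
      h1, weight]
  · have : X i ⁻¹' {z | ofInt z = D} = {ω | X i ω = 1} := by ext; simp [ofInt]
    rw [this, h1, weight]

lemma measureReal_stepWord_preimage (hmeas : ∀ i, Measurable (X i)) (hindep : iIndepFun X μ)
    (hp0 : 0 ≤ p) (hX1 : ∀ i, μ {ω | X i ω = 1} = ENNReal.ofReal p) {n : ℕ}
    (ε : Fin n → DyckStep) :
    μ.real (stepWord X n ⁻¹' {ε}) = (ofFn ε).pathWeight p := by
  rw [stepWord_preimage_singleton, measureReal_def, (hindep.precomp Fin.val_injective).meas_iInter
      fun i => ⟨_, trivial, rfl⟩, ENNReal.toReal_prod, pathWeight, map_ofFn, prod_ofFn]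
  exact Fintype.prod_congr _ _ fun i => measureReal_ofInt_preimage (hmeas i) hp0 (hX1 i) (ε i)

lemma ae_toInt_ofInt (hmeas : ∀ i, Measurable (X i)) (hp0 : 0 ≤ p) (hp1 : p ≤ 1)
    (hX1 : ∀ i, μ {ω | X i ω = 1} = ENNReal.ofReal p)
    (hX2 : ∀ i, μ {ω | X i ω = -1} = ENNReal.ofReal (1 - p)) :
    ∀ᵐ ω ∂μ, ∀ i, (ofInt (X i ω)).toInt = X i ω := by
  rw [ae_all_iff]
  intro i
  have hm (z : ℤ) : MeasurableSet {ω | X i ω = z} := hmeas i (measurableSet_singleton z)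
  have hpm : ∀ᵐ ω ∂μ, X i ω = 1 ∨ X i ω = -1 := by
    refine (mem_ae_iff_prob_eq_one ((hm 1).union (hm (-1)))).2 ?_
    rw [measure_union (Set.disjoint_left.2 fun ω h1 h2 => by simp_all) (hm (-1)), hX1, hX2,
      ← ENNReal.ofReal_add hp0 (sub_nonneg.2 hp1), add_sub_cancel, ENNReal.ofReal_one]
  filter_upwards [hpm] with ω hω using toInt_ofInt hω

end Walk

theorem prob_nonpos_general {Ω : Type*} [MeasurableSpace Ω] (μ : Measure Ω)
    [IsProbabilityMeasure μ]
    (p : ℝ) (hp0 : 0 < p) (hp1 : p < 1)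
    (X : ℕ → Ω → ℤ) (hmeas : ∀ i, Measurable (X i))
    (hindep : iIndepFun X μ)
    (hX1 : ∀ i, μ {ω | X i ω = 1} = ENNReal.ofReal p)
    (hX2 : ∀ i, μ {ω | X i ω = -1} = ENNReal.ofReal (1 - p))
    (S : ℕ → Ω → ℤ) (hS : ∀ n ω, S n ω = ∑ i ∈ Finset.range n, X i ω)
    (n : ℕ)
    :
    (μ {ω | ∀ m, 1 ≤ m → m ≤ n → S m ω ≤ 0}).toReal
      = 1 - 2 * p * ∑ i ∈ (Finset.range n).filter (fun i => Even i),
          aCoef i * (p * (1 - p)) ^ (i / 2) := by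
  have hevent : {ω | ∀ m, 1 ≤ m → m ≤ n → S m ω ≤ 0}
      =ᵐ[μ] stepWord X n ⁻¹' ↑(univ.filter fun ε : Fin n → DyckStep => (ofFn ε).StaysNonpos) := by
    filter_upwards [ae_toInt_ofInt hmeas hp0.le hp1.le hX1 hX2] with ω hω
    simp only [hS, coe_filter_univ]
    exact propext (forall_sum_range_nonpos_iff hω n)
  have hsum : ∑ i ∈ range n with Even i, (catalan (i / 2) : ℝ) * (p * (1 - p)) ^ (i / 2) =
      2 * ∑ i ∈ range n with Even i, aCoef i * (p * (1 - p)) ^ (i / 2) := by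
    rw [mul_sum]
    refine Finset.sum_congr rfl fun i hi => ?_
    rw [catalan_div_two_eq_two_mul_aCoef (Finset.mem_filter.1 hi).2, mul_assoc]
  rw [← measureReal_def, measureReal_congr hevent,
    ← sum_measureReal_preimage_singleton _ fun _ _ => measurableSet_stepWord_preimage hmeas _]
  simp only [measureReal_stepWord_preimage hmeas hindep hp0.le hX1]
  change nonposWeight p n = _
  rw [nonposWeight_eq, hsum]
  ring

theorem prob_nonpos {Ω : Type*} [MeasurableSpace Ω] (μ : Measure Ω)
    [IsProbabilityMeasure μ]
    (p : ℝ) (hp0 : 0 < p) (hp1 : p < 1)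
    (X : ℕ → Ω → ℤ) (hmeas : ∀ i, Measurable (X i))
    (hindep : iIndepFun X μ)
    (hX1 : ∀ i, μ {ω | X i ω = 1} = ENNReal.ofReal p)
    (hX2 : ∀ i, μ {ω | X i ω = -1} = ENNReal.ofReal (1 - p))
    (S : ℕ → Ω → ℤ) (hS : ∀ n ω, S n ω = ∑ i ∈ Finset.range n, X i ω)
    (n : ℕ) (hn : 1 ≤ n)
    :
    (μ {ω | ∀ m, 1 ≤ m → m ≤ n → S m ω ≤ 0}).toReal
      = 1 - 2 * p * ∑ i ∈ (Finset.range n).filter (fun i => Even i),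
          aCoef i * (p * (1 - p)) ^ (i / 2) :=
  prob_nonpos_general μ p hp0 hp1 X hmeas hindep hX1 hX2 S hS n
end

section
/- For the symmetric random walk (p = 1/2) and even n ≥ 0, P(S_1 ≥ 0, S_2 ≥ 0, ..., S_n ≥ 0) = P(S_n = 0) = 2^{−n}·C(n, n/2). -/
/-!
Almost surely the first `n` steps form a list of signs `±1`, and by independence each such list
has probability `2⁻ⁿ`; so both probabilities are counts of sign lists divided by `2ⁿ`. Lists with
sum `0` have exactly `n / 2` entries `1`, giving `C(n, n/2)`. Among lists all of whose partial
sums are nonnegative, those with `j` entries `1` number `C(n, j) - C(n, j + 1)` (ballot formula,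
by induction on `n` adding one step), and the sum over `j ≥ n / 2` telescopes to `C(n, n/2)`.
-/

open MeasureTheory ProbabilityTheory Finset

namespace SignList

def signLists : ℕ → Finset (List ℤ)
  | 0 => {[]}
  | n + 1 => (signLists n).image (List.cons 1) ∪ (signLists n).image (List.cons (-1))

theorem mem_signLists {n : ℕ} {l : List ℤ} :
    l ∈ signLists n ↔ l.length = n ∧ ∀ x ∈ l, x = 1 ∨ x = -1 := by
  induction n generalizing l with
  | zero => simp +contextual [signLists, List.length_eq_zero_iff]
  | succ n ih =>
    cases l with
    | nil => simp [signLists]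
    | cons x l =>
      simp only [signLists, mem_union, mem_image, List.cons.injEq, ih, List.length_cons,
        List.forall_mem_cons]
      constructor
      · rintro (⟨l', ⟨hlen, hl'⟩, rfl, rfl⟩ | ⟨l', ⟨hlen, hl'⟩, rfl, rfl⟩) <;> simp_all
      · rintro ⟨hlen, hx | hx, hl⟩
        · exact .inl ⟨l, ⟨by omega, hl⟩, hx.symm, rfl⟩
        · exact .inr ⟨l, ⟨by omega, hl⟩, hx.symm, rfl⟩

theorem sum_eq_of_forall_mem {l : List ℤ} (hl : ∀ x ∈ l, x = 1 ∨ x = -1) :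
    l.sum = 2 * l.count 1 - l.length := by
  induction l with
  | nil => simp
  | cons x l ih =>
    rw [List.forall_mem_cons] at hl
    rcases hl.1 with rfl | rfl
    · rw [List.sum_cons, List.count_cons_self, List.length_cons, ih hl.2]
      push_cast
      ring
    · rw [List.sum_cons, List.count_cons_of_ne (by decide), List.length_cons, ih hl.2]
      push_cast
      ring

theorem sum_eq_of_mem_signLists {n : ℕ} {l : List ℤ} (hl : l ∈ signLists n) :
    l.sum = 2 * l.count 1 - n := by
  obtain ⟨hlen, hl⟩ := mem_signLists.1 hl
  rw [sum_eq_of_forall_mem hl, hlen]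

theorem card_filter_signLists_succ (n : ℕ) (p : List ℤ → Prop) [DecidablePred p] :
    #{l ∈ signLists (n + 1) | p l} =
      #{l ∈ signLists n | p (1 :: l)} + #{l ∈ signLists n | p (-1 :: l)} := by
  rw [signLists, filter_union, filter_image, filter_image, card_union_of_disjoint,
    card_image_of_injective _ List.cons_injective, card_image_of_injective _ List.cons_injective]
  simp only [disjoint_left, mem_image]
  rintro _ ⟨_, _, rfl⟩ ⟨_, _, h⟩
  simp at h

theorem card_filter_count_eq (n j : ℕ) :
    #{l ∈ signLists n | l.count 1 = j} = n.choose j := by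
  induction n generalizing j with
  | zero => cases j <;> simp [signLists, filter_singleton]
  | succ n ih =>
    rw [card_filter_signLists_succ]
    cases j with
    | zero => simp [ih]
    | succ j => simp [ih, Nat.choose_succ_succ]

theorem card_filter_sum_eq_zero (m : ℕ) :
    #{l ∈ signLists (2 * m) | l.sum = 0} = (2 * m).choose m := by
  rw [← card_filter_count_eq]
  congr 1
  refine filter_congr fun l hl => ?_
  rw [sum_eq_of_mem_signLists hl]
  omega

def TailSumsNonneg (l : List ℤ) : Prop := ∀ t ∈ l.tails, 0 ≤ t.sum

instance : DecidablePred TailSumsNonneg :=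
  fun l => inferInstanceAs (Decidable (∀ t ∈ l.tails, 0 ≤ t.sum))

@[simp]
theorem tailSumsNonneg_nil : TailSumsNonneg [] := by
  simp [TailSumsNonneg]

theorem tailSumsNonneg_cons {x : ℤ} {l : List ℤ} :
    TailSumsNonneg (x :: l) ↔ 0 ≤ x + l.sum ∧ TailSumsNonneg l := by
  simp [TailSumsNonneg]

theorem TailSumsNonneg.sum_nonneg {l : List ℤ} (h : TailSumsNonneg l) : 0 ≤ l.sum :=
  h l ((List.mem_tails l l).2 (List.suffix_refl l))

def nonnegCount (n j : ℕ) : ℕ := #{l ∈ signLists n | TailSumsNonneg l ∧ l.count 1 = j}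

theorem nonnegCount_eq_zero_of_lt {n j : ℕ} (h : 2 * j < n) : nonnegCount n j = 0 := by
  refine card_eq_zero.2 (filter_eq_empty_iff.2 fun l hl ⟨hnonneg, hcount⟩ => ?_)
  have := hnonneg.sum_nonneg
  rw [sum_eq_of_mem_signLists hl, hcount] at this
  omega

-- An up-step keeps a nonnegative path nonnegative; a down-step does so iff the path ended at a
-- positive height, i.e. iff `n < 2 * (j + 1)`.
theorem nonnegCount_succ_succ (n j : ℕ) :
    nonnegCount (n + 1) (j + 1) =
      nonnegCount n j + if n < 2 * (j + 1) then nonnegCount n (j + 1) else 0 := by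
  rw [nonnegCount, card_filter_signLists_succ]
  congr 1
  · refine congrArg card (filter_congr fun l _ => ?_)
    rw [tailSumsNonneg_cons, List.count_cons_self, add_left_inj]
    exact ⟨fun h => ⟨h.1.2, h.2⟩, fun h => ⟨⟨by linarith [h.1.sum_nonneg], h.1⟩, h.2⟩⟩
  · have hcount (l : List ℤ) : (-1 :: l).count 1 = l.count 1 := List.count_cons_of_ne (by decide)
    split_ifs with hlt
    · refine congrArg card (filter_congr fun l hl => ?_)
      rw [tailSumsNonneg_cons, sum_eq_of_mem_signLists hl, hcount]
      constructor
      · rintro ⟨⟨-, h⟩, hc⟩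
        exact ⟨h, hc⟩
      · rintro ⟨h, hc⟩
        exact ⟨⟨by omega, h⟩, hc⟩
    · refine card_eq_zero.2 (filter_eq_empty_iff.2 fun l hl => ?_)
      rw [tailSumsNonneg_cons, sum_eq_of_mem_signLists hl, hcount]
      rintro ⟨⟨hle, -⟩, hc⟩
      omega

theorem nonnegCount_eq {n j : ℕ} (h : n ≤ 2 * j + 1) :
    (nonnegCount n j : ℤ) = n.choose j - n.choose (j + 1) := by
  induction n generalizing j with
  | zero => cases j <;> simp [nonnegCount, signLists, filter_singleton]
  | succ n ih =>
    cases j with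
    | zero =>
      obtain rfl : n = 0 := by omega
      simp [nonnegCount_eq_zero_of_lt]
    | succ j =>
      rw [nonnegCount_succ_succ]
      rcases Nat.lt_or_ge n (2 * j + 2) with hlt | hge
      · rw [if_pos (by omega), Nat.cast_add, ih (by omega), ih (by omega),
          Nat.choose_succ_succ' n j, Nat.choose_succ_succ' n (j + 1)]
        push_cast
        ring
      · obtain rfl : n = 2 * j + 2 := by omega
        rw [if_neg (by omega), nonnegCount_eq_zero_of_lt (by omega),
          show 2 * j + 2 + 1 = 2 * (j + 1) + 1 by ring, Nat.choose_symm_half (j + 1)]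
        simp

theorem card_filter_tailSumsNonneg (m : ℕ) :
    #{l ∈ signLists (2 * m) | TailSumsNonneg l} = (2 * m).choose m := by
  have hcount : ∀ l ∈ {l ∈ signLists (2 * m) | TailSumsNonneg l},
      l.count 1 ∈ Ico m (2 * m + 1) := by
    intro l hl
    obtain ⟨hl, hnonneg⟩ := mem_filter.1 hl
    have hsum := hnonneg.sum_nonneg
    have hle := l.count_le_length (a := 1)
    rw [sum_eq_of_mem_signLists hl] at hsum
    rw [(mem_signLists.1 hl).1] at hle
    rw [mem_Ico]
    omega
  zify
  rw [card_eq_sum_card_fiberwise hcount, sum_Ico_eq_sum_range]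
  push_cast
  simp only [filter_filter]
  calc ∑ i ∈ range (2 * m + 1 - m), (nonnegCount (2 * m) (m + i) : ℤ)
      = ∑ i ∈ range (m + 1), (((2 * m).choose (m + i) : ℤ) - (2 * m).choose (m + (i + 1))) :=
        sum_congr (by congr 1; omega) fun i _ => nonnegCount_eq (by omega)
    _ = (2 * m).choose m := by
        rw [sum_range_sub' (fun i => ((2 * m).choose (m + i) : ℤ)),
          Nat.choose_eq_zero_of_lt (by omega : 2 * m < m + (m + 1))]
        simp

end SignList

open scoped ENNReal
open SignList

section RandomWalk

variable {Ω : Type*}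

/-- The first `n` steps, latest first, so that taking one more step is `List.cons` and the tails
of `revSteps X n ω` are the `revSteps X m ω` with `m ≤ n`. -/
def revSteps (X : ℕ → Ω → ℤ) (n : ℕ) (ω : Ω) : List ℤ :=
  ((List.range n).map (X · ω)).reverse

theorem revSteps_succ (X : ℕ → Ω → ℤ) (n : ℕ) (ω : Ω) :
    revSteps X (n + 1) ω = X n ω :: revSteps X n ω := by
  simp [revSteps, List.range_succ]

theorem sum_revSteps (X : ℕ → Ω → ℤ) (n : ℕ) (ω : Ω) :
    (revSteps X n ω).sum = ∑ i ∈ range n, X i ω := by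
  induction n with
  | zero => rfl
  | succ n ih => rw [revSteps_succ, List.sum_cons, ih, sum_range_succ, add_comm]

theorem tailSumsNonneg_revSteps_iff (X : ℕ → Ω → ℤ) (n : ℕ) (ω : Ω) :
    TailSumsNonneg (revSteps X n ω) ↔ ∀ m ≤ n, 0 ≤ ∑ i ∈ range m, X i ω := by
  induction n with
  | zero => simp [revSteps]
  | succ n ih =>
    rw [revSteps_succ, tailSumsNonneg_cons, ih, ← List.sum_cons, ← revSteps_succ, sum_revSteps]
    constructor
    · rintro ⟨hlast, hprev⟩ m hm
      rcases Nat.of_le_succ hm with hm | rfl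
      exacts [hprev m hm, hlast]
    · intro h
      exact ⟨h (n + 1) le_rfl, fun m hm => h m (by omega)⟩

theorem mem_signLists_revSteps {X : ℕ → Ω → ℤ} {n : ℕ} {ω : Ω}
    (h : ∀ i, X i ω = 1 ∨ X i ω = -1) : revSteps X n ω ∈ signLists n :=
  mem_signLists.2 ⟨by simp [revSteps], by simp [revSteps, h]⟩

theorem setOf_revSteps_eq {X : ℕ → Ω → ℤ} {n : ℕ} {l : List ℤ} (hl : l.length = n) :
    {ω | revSteps X n ω = l} = ⋂ i ∈ range n, X i ⁻¹' {l.reverse.getD i 0} := by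
  ext ω
  simp only [revSteps, Set.mem_ofPred_eq, List.reverse_eq_iff, Set.mem_iInter, mem_range,
    Set.mem_preimage, Set.mem_singleton_iff]
  rw [List.ext_getElem_iff]
  simp +contextual [hl]

variable [MeasurableSpace Ω] {μ : Measure Ω} {X : ℕ → Ω → ℤ}

theorem ae_eq_one_or_eq_neg_one [IsProbabilityMeasure μ] {Y : Ω → ℤ} (hY : Measurable Y)
    (h1 : μ {ω | Y ω = 1} = ENNReal.ofReal (1 / 2))
    (h2 : μ {ω | Y ω = -1} = ENNReal.ofReal (1 / 2)) :
    ∀ᵐ ω ∂μ, Y ω = 1 ∨ Y ω = -1 := by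
  have hdisj : Disjoint {ω | Y ω = 1} {ω | Y ω = -1} :=
    Set.disjoint_left.2 fun ω h1 h2 => by simp_all
  have hunion : μ ({ω | Y ω = 1} ∪ {ω | Y ω = -1}) = 1 := by
    rw [measure_union hdisj (hY (measurableSet_singleton _)), h1, h2,
      ← ENNReal.ofReal_add (by norm_num) (by norm_num)]
    norm_num
  exact ae_iff.2 ((prob_compl_eq_zero_iff
    ((hY (measurableSet_singleton _)).union (hY (measurableSet_singleton _)))).2 hunion)

theorem measure_revSteps_eq (hindep : iIndepFun X μ)
    (hX1 : ∀ i, μ {ω | X i ω = 1} = ENNReal.ofReal (1 / 2))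
    (hX2 : ∀ i, μ {ω | X i ω = -1} = ENNReal.ofReal (1 / 2))
    {n : ℕ} {l : List ℤ} (hl : l ∈ signLists n) :
    μ {ω | revSteps X n ω = l} = ENNReal.ofReal (1 / 2) ^ n := by
  obtain ⟨hlen, hsign⟩ := mem_signLists.1 hl
  rw [setOf_revSteps_eq hlen, hindep.measure_inter_preimage_eq_mul _
    fun _ _ => measurableSet_singleton _]
  refine (prod_eq_pow_card fun i hi => ?_).trans (by rw [card_range])
  have hi : i < l.reverse.length := by simpa [hlen] using hi
  rw [List.getD_eq_getElem _ _ hi]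
  rcases hsign _ (List.mem_reverse.1 (List.getElem_mem hi)) with h | h
  · rw [h]; exact hX1 i
  · rw [h]; exact hX2 i

theorem measure_setOf_revSteps [IsProbabilityMeasure μ] (hmeas : ∀ i, Measurable (X i))
    (hindep : iIndepFun X μ)
    (hX1 : ∀ i, μ {ω | X i ω = 1} = ENNReal.ofReal (1 / 2))
    (hX2 : ∀ i, μ {ω | X i ω = -1} = ENNReal.ofReal (1 / 2))
    (n : ℕ) (p : List ℤ → Prop) [DecidablePred p] :
    μ {ω | p (revSteps X n ω)} = #{l ∈ signLists n | p l} * ENNReal.ofReal (1 / 2) ^ n := by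
  have hsign : ∀ᵐ ω ∂μ, revSteps X n ω ∈ signLists n := by
    filter_upwards [ae_all_iff.2 fun i => ae_eq_one_or_eq_neg_one (hmeas i) (hX1 i) (hX2 i)]
      with ω hω using mem_signLists_revSteps hω
  calc μ {ω | p (revSteps X n ω)}
      = μ (⋃ l ∈ {l ∈ signLists n | p l}, {ω | revSteps X n ω = l}) := by
        refine measure_congr (Filter.eventuallyEq_set.2 ?_)
        filter_upwards [hsign] with ω hω
        simp [hω]
    _ = ∑ l ∈ {l ∈ signLists n | p l}, μ {ω | revSteps X n ω = l} := by
        refine measure_biUnion_finset (fun l _ l' _ hne => ?_) fun l hl => ?_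
        · exact Set.disjoint_left.2 fun ω h h' => hne (h.symm.trans h')
        · rw [setOf_revSteps_eq (mem_signLists.1 (mem_filter.1 hl).1).1]
          exact Finset.measurableSet_biInter _ fun i _ => hmeas i (measurableSet_singleton _)
    _ = #{l ∈ signLists n | p l} * ENNReal.ofReal (1 / 2) ^ n := by
        rw [sum_congr rfl fun l hl => measure_revSteps_eq hindep hX1 hX2 (mem_filter.1 hl).1,
          sum_const, nsmul_eq_mul]

end RandomWalk

theorem nonneg_symmetric {Ω : Type*} [MeasurableSpace Ω] (μ : Measure Ω)
    [IsProbabilityMeasure μ]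
    (X : ℕ → Ω → ℤ) (hmeas : ∀ i, Measurable (X i))
    (hindep : iIndepFun X μ)
    (hX1 : ∀ i, μ {ω | X i ω = 1} = ENNReal.ofReal (1 / 2))
    (hX2 : ∀ i, μ {ω | X i ω = -1} = ENNReal.ofReal (1 / 2))
    (S : ℕ → Ω → ℤ) (hS : ∀ n ω, S n ω = ∑ i ∈ Finset.range n, X i ω)
    (n : ℕ) (hn : Even n)
    :
    (μ {ω | ∀ m, 1 ≤ m → m ≤ n → 0 ≤ S m ω}).toReal = (μ {ω | S n ω = 0}).toReal ∧
    (μ {ω | S n ω = 0}).toReal = ((1 : ℝ) / 2) ^ n * (n.choose (n / 2) : ℝ) := by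
  obtain ⟨k, rfl⟩ := hn
  rw [← two_mul, Nat.mul_div_cancel_left k two_pos]
  have hnonneg : {ω | ∀ m, 1 ≤ m → m ≤ 2 * k → 0 ≤ S m ω} =
      {ω | TailSumsNonneg (revSteps X (2 * k) ω)} := by
    ext ω
    simp only [Set.mem_ofPred_eq, tailSumsNonneg_revSteps_iff, ← hS]
    refine ⟨fun h m hm => ?_, fun h m _ hm => h m hm⟩
    rcases m.eq_zero_or_pos with rfl | hpos
    · simp [hS]
    · exact h m hpos hm
  have hzero : {ω | S (2 * k) ω = 0} = {ω | (revSteps X (2 * k) ω).sum = 0} := by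
    simp only [sum_revSteps, hS]
  rw [hnonneg, hzero, measure_setOf_revSteps hmeas hindep hX1 hX2 _ TailSumsNonneg,
    measure_setOf_revSteps hmeas hindep hX1 hX2 _ (fun l => l.sum = 0),
    card_filter_tailSumsNonneg, card_filter_sum_eq_zero]
  refine ⟨rfl, ?_⟩
  rw [ENNReal.toReal_mul, ENNReal.toReal_pow, ENNReal.toReal_ofReal (by norm_num),
    ENNReal.toReal_natCast, mul_comm]
end
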